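/- arXiv:1208.0264 — 7 statements merged into one kernel-verified Lean document; each statement's English description precedes it below -/
import Mathlib

section
/- If M and A are invertible self-adjoint operators on a finite-dimensional Hilbert space H with M positive-definite, and U is a tuple of vectors forming a basis of an M⁻¹A-invariant subspace, then the matrix ⟨U, AU⟩ (with entries ⟨uᵢ, A uⱼ⟩) is nonsingular. -/
open scoped InnerProductSpace

/-- If M and A are invertible self-adjoint operators on a finite-dimensional Hilbert
space H with M positive-definite, and U is a tuple of vectors forming a basis of an
M⁻¹A-invariant subspace, then the matrix ⟨U, AU⟩ is nonsingular. -/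
theorem stmt0 {H : Type*} [NormedAddCommGroup H] [InnerProductSpace ℂ H]
    [FiniteDimensional ℂ H] {d : ℕ}
    (M A Minv : H →ₗ[ℂ] H)
    (hM : M.IsSymmetric) (hA : A.IsSymmetric)
    (hMbij : Function.Bijective M) (hAbij : Function.Bijective A)
    (hMinv : ∀ x, M (Minv x) = x ∧ Minv (M x) = x)
    (hMpos : ∀ x : H, x ≠ 0 → 0 < (⟪x, M x⟫_ℂ).re)
    (U : Fin d → H)
    (hUli : LinearIndependent ℂ U)
    (hUinv : ∀ i, Minv (A (U i)) ∈ Submodule.span ℂ (Set.range U)) :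
    IsUnit (Matrix.of fun i j => ⟪U i, A (U j)⟫_ℂ) := by
  rw [Matrix.isUnit_iff_isUnit_det, isUnit_iff_ne_zero]
  intro hdet
  obtain ⟨c, hc, hcv⟩ := (Matrix.exists_mulVec_eq_zero_iff).2 hdet
  set w : H := ∑ j, c j • U j with hw
  have hAw' : A w = ∑ j, c j • A (U j) := by simp [hw, map_sum, map_smul]
  have hiw : ∀ i, ⟪U i, A w⟫_ℂ = 0 := by
    intro i
    have h := congrFun hcv i
    simp only [Matrix.mulVec, dotProduct, Matrix.of_apply, Pi.zero_apply] at h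
    rw [hAw', inner_sum]
    simp only [inner_smul_right]
    rw [← h]
    exact Finset.sum_congr rfl fun j _ => mul_comm _ _
  have hmem : Minv (A w) ∈ Submodule.span ℂ (Set.range U) := by
    have : Minv (A w) = ∑ j, c j • Minv (A (U j)) := by
      rw [hAw']; simp [map_sum, map_smul]
    rw [this]
    exact Submodule.sum_mem _ fun j _ => Submodule.smul_mem _ _ (hUinv j)
  obtain ⟨b, hb⟩ := (Submodule.mem_span_range_iff_exists_fun ℂ).1 hmem
  have hz : ⟪Minv (A w), A w⟫_ℂ = 0 := by
    rw [← hb, sum_inner]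
    simp [inner_smul_left, hiw]
  have hv0 : Minv (A w) = 0 := by
    by_contra hne
    have hp := hMpos _ hne
    rw [(hMinv (A w)).1, hz] at hp
    simp at hp
  have hAw : A w = 0 := by
    calc A w = M (Minv (A w)) := ((hMinv (A w)).1).symm
    _ = M 0 := by rw [hv0]
    _ = 0 := map_zero M
  have hw0 : w = 0 := hAbij.1 (by simp [hAw])
  exact hc (funext fun i => Fintype.linearIndependent_iff.1 hUli c (hw ▸ hw0) i)
end

section
/- Under the stated assumptions, the operator P_M M⁻¹ A is self-adjoint with respect to the inner product ⟨x,y⟩_M = ⟨Mx, y⟩, i.e., ⟨M P_M M⁻¹ A x, y⟩ = ⟨M x, P_M M⁻¹ A y⟩ for all x, y ∈ H. -/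
open scoped InnerProductSpace

/-- P_M M⁻¹ A is self-adjoint with respect to the M-inner product ⟨x,y⟩_M = ⟨Mx,y⟩. -/
theorem stmt5 {H : Type*} [NormedAddCommGroup H] [InnerProductSpace ℂ H] {d : ℕ}
    (M A Minv : H →ₗ[ℂ] H)
    (hM : M.IsSymmetric) (hA : A.IsSymmetric)
    (hMbij : Function.Bijective M) (hAbij : Function.Bijective A)
    (hMinv : ∀ x, M (Minv x) = x ∧ Minv (M x) = x)
    (hMpos : ∀ x : H, x ≠ 0 → 0 < (⟪x, M x⟫_ℂ).re)
    (U : Fin d → H)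
    (E : Matrix (Fin d) (Fin d) ℂ)
    (hE : E = Matrix.of fun i j => ⟪U i, A (U j)⟫_ℂ)
    (hEunit : IsUnit E.det)
    (PM : H → H)
    (hPM : ∀ x, PM x = x - ∑ i, (∑ j, E⁻¹ i j * ⟪M (U j), x⟫_ℂ) • Minv (A (U i))) :
    ∀ x y : H, ⟪M (PM (Minv (A x))), y⟫_ℂ = ⟪M x, PM (Minv (A y))⟫_ℂ := by
  intro x y
  have hEH : E.IsHermitian := by
    rw [hE]
    ext i j
    simp only [Matrix.conjTranspose_apply, Matrix.of_apply, RCLike.star_def]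
    rw [← inner_conj_symm, hA]
    exact Complex.conj_conj _
  have hEinvH : E⁻¹.IsHermitian := hEH.inv
  have hMM : ∀ z, M (Minv (A z)) = A z := fun z => (hMinv (A z)).1
  have h2 : ∀ z w, ⟪M w, Minv (A z)⟫_ℂ = ⟪w, A z⟫_ℂ := fun z w => by
    rw [hM, hMM]
  rw [hPM, hPM]
  simp only [map_sub, map_sum, map_smul, inner_sub_left, inner_sub_right,
    sum_inner, inner_sum, inner_smul_left, inner_smul_right, hMM, h2]
  rw [hA]
  congr 1
  simp only [map_mul, Finset.sum_mul]
  rw [Finset.sum_comm]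
  refine Finset.sum_congr rfl fun i _ => Finset.sum_congr rfl fun j _ => ?_
  have e1 : (starRingEnd ℂ) (E⁻¹ j i) = E⁻¹ i j := by
    conv_rhs => rw [← hEinvH]
    simp [Matrix.conjTranspose_apply]
  rw [hA (U j) y, ← hA x (U i), ← inner_conj_symm (A x) (U i), e1]
  ring
end

section
/- If x̃_n ∈ H and the corrected approximation is defined as x_n := P* x̃_n + U E⁻¹ ⟨U, b⟩, then the residual identity M⁻¹ b − M⁻¹ A x_n = P_M M⁻¹ b − P_M M⁻¹ A x̃_n holds. -/
open scoped InnerProductSpace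

/-- Residual identity for the corrected approximation
x_n := P* x̃_n + U E⁻¹ ⟨U, b⟩:  M⁻¹b − M⁻¹A x_n = P_M M⁻¹ b − P_M M⁻¹ A x̃_n. -/
theorem stmt6 {H : Type*} [NormedAddCommGroup H] [InnerProductSpace ℂ H] {d : ℕ}
    (M A Minv : H →ₗ[ℂ] H)
    (hM : M.IsSymmetric) (hA : A.IsSymmetric)
    (hMbij : Function.Bijective M) (hAbij : Function.Bijective A)
    (hMinv : ∀ x, M (Minv x) = x ∧ Minv (M x) = x)
    (hMpos : ∀ x : H, x ≠ 0 → 0 < (⟪x, M x⟫_ℂ).re)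
    (U : Fin d → H)
    (E : Matrix (Fin d) (Fin d) ℂ)
    (hE : E = Matrix.of fun i j => ⟪U i, A (U j)⟫_ℂ)
    (hEunit : IsUnit E.det)
    (PM Pstar : H → H)
    (hPM : ∀ x, PM x = x - ∑ i, (∑ j, E⁻¹ i j * ⟪M (U j), x⟫_ℂ) • Minv (A (U i)))
    (hPstar : ∀ x, Pstar x = x - ∑ i, (∑ j, E⁻¹ i j * ⟪A (U j), x⟫_ℂ) • U i)
    (b xtn xn : H)
    (hxn : xn = Pstar xtn + ∑ i, (∑ j, E⁻¹ i j * ⟪U j, b⟫_ℂ) • U i) :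
    Minv b - Minv (A xn) = PM (Minv b) - PM (Minv (A xtn)) := by
  subst hxn
  have hMb : ∀ j, ⟪M (U j), Minv b⟫_ℂ = ⟪U j, b⟫_ℂ := fun j => by
    rw [hM (U j) (Minv b), (hMinv b).1]
  have hMA : ∀ j, ⟪M (U j), Minv (A xtn)⟫_ℂ = ⟪A (U j), xtn⟫_ℂ := fun j => by
    rw [hM (U j) (Minv (A xtn)), (hMinv (A xtn)).1, ← hA]
  simp only [hPM, hPstar, hMb, hMA, map_add, map_sub, map_sum, map_smul]
  abel
end

section
/- If U spans the M⁻¹A-invariant subspace corresponding to eigenvalues λ₁,…,λ_d of M⁻¹A, then the spectrum of the deflated operator P_M M⁻¹ A equals {0} ∪ {λ_{d+1},…,λ_N}, where λ₁,…,λ_N is the full spectrum of M⁻¹A (counted with multiplicity). -/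
open scoped InnerProductSpace

/-!
Write `T = M⁻¹A` and `V` for the span of the first `d` eigenvectors; `V` is `T`-invariant and
equals `span U`. The correction `x - P_M x` lies in `V`, and `P_M T` vanishes on `V` because
`⟪M U_j, T U_k⟫ = ⟪U_j, A U_k⟫ = E_jk`. So `P_M` does not change the eigen-coordinates outside
the first `d`: an eigenvector of `P_M T` whose eigenvalue is neither `0` nor some `λ_i`, `i ≥ d`,
has all those coordinates zero, hence lies in `V`, where `P_M T` is zero. Conversely `P_M W_i`
is an eigenvector for `λ_i` when `i ≥ d`, and `V` lies in the kernel; it is nonzero because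
`U_1 ≠ 0`, `E` being invertible.
-/

namespace Module.Basis

variable {ι K V : Type*} [Field K] [AddCommGroup V] [Module K V] (b : Basis ι K V)

theorem repr_apply_eq_zero_of_mem_span_image {S : Set ι} {y : V}
    (hy : y ∈ Submodule.span K (b '' S)) {i : ι} (hi : i ∉ S) : b.repr y i = 0 :=
  Finsupp.notMem_support_iff.mp fun h => hi ((b.mem_span_image.mp hy) h)

theorem repr_apply_eq_of_sub_mem_span_image {S : Set ι} {x y : V}
    (hxy : x - y ∈ Submodule.span K (b '' S)) {i : ι} (hi : i ∉ S) :
    b.repr x i = b.repr y i := by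
  simpa [sub_eq_zero] using b.repr_apply_eq_zero_of_mem_span_image hxy hi

variable {b} {lam : ι → K} {T : Module.End K V}

theorem repr_apply_eq_mul_of_apply_eq_smul (hT : ∀ i, T (b i) = lam i • b i) (x : V) (i : ι) :
    b.repr (T x) i = lam i * b.repr x i := by
  have : (Finsupp.lapply i ∘ₗ b.repr.toLinearMap) ∘ₗ T
      = lam i • (Finsupp.lapply i ∘ₗ b.repr.toLinearMap) := by
    refine b.ext fun j => ?_
    classical
    by_cases hji : j = i <;> simp [hT, hji]
  exact LinearMap.congr_fun this x

theorem span_image_le_comap_of_apply_eq_smul (hT : ∀ i, T (b i) = lam i • b i) (S : Set ι) :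
    Submodule.span K (b '' S) ≤ (Submodule.span K (b '' S)).comap T := by
  rw [Submodule.span_le]
  rintro _ ⟨j, hj, rfl⟩
  simpa [hT] using
    Submodule.smul_mem _ (lam j) (Submodule.subset_span (Set.mem_image_of_mem b hj))

variable {S : Set ι} {P : Module.End K V}

theorem hasEigenvalue_comp_zero (hPT : ∀ y ∈ Submodule.span K (b '' S), P (T y) = 0)
    (hS : Submodule.span K (b '' S) ≠ ⊥) : Module.End.HasEigenvalue (P ∘ₗ T) 0 := by
  obtain ⟨y, hy, hy0⟩ := Submodule.exists_mem_ne_zero_of_ne_bot hS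
  exact Module.End.hasEigenvalue_of_hasEigenvector
    ⟨Module.End.mem_eigenspace_iff.mpr (by simp [hPT y hy]), hy0⟩

theorem hasEigenvalue_comp_of_notMem (hT : ∀ i, T (b i) = lam i • b i)
    (hP : ∀ x, x - P x ∈ Submodule.span K (b '' S))
    (hPT : ∀ y ∈ Submodule.span K (b '' S), P (T y) = 0) {i : ι} (hi : i ∉ S) :
    Module.End.HasEigenvalue (P ∘ₗ T) (lam i) := by
  have heig : (P ∘ₗ T) (P (b i)) = lam i • P (b i) := by
    rw [LinearMap.comp_apply, ← sub_sub_cancel (b i) (P (b i)), map_sub T, map_sub P,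
      hPT _ (hP _), sub_zero, sub_sub_cancel, hT, map_smul]
  have hne : P (b i) ≠ 0 := by
    intro h0
    simpa [h0] using b.repr_apply_eq_of_sub_mem_span_image (hP (b i)) hi
  exact Module.End.hasEigenvalue_of_hasEigenvector
    ⟨Module.End.mem_eigenspace_iff.mpr heig, hne⟩

theorem eq_zero_or_of_hasEigenvalue_comp (hT : ∀ i, T (b i) = lam i • b i)
    (hP : ∀ x, x - P x ∈ Submodule.span K (b '' S))
    (hPT : ∀ y ∈ Submodule.span K (b '' S), P (T y) = 0) {μ : K}
    (hμ : Module.End.HasEigenvalue (P ∘ₗ T) μ) : μ = 0 ∨ ∃ i ∉ S, μ = lam i := by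
  by_contra! hcon
  obtain ⟨hμ0, hμlam⟩ := hcon
  obtain ⟨x, hx⟩ := hμ.exists_hasEigenvector
  have hxe : P (T x) = μ • x := hx.apply_eq_smul
  have hxS : x ∈ Submodule.span K (b '' S) := by
    refine b.mem_span_image.mpr fun i hi => by_contra fun hiS => ?_
    have hcoord : lam i = μ ∨ b.repr x i = 0 := by
      simpa [hxe, repr_apply_eq_mul_of_apply_eq_smul hT] using
        b.repr_apply_eq_of_sub_mem_span_image (hP (T x)) hiS
    exact Finsupp.mem_support_iff.mp hi (hcoord.resolve_left fun h => hμlam i hiS h.symm)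
  have hμx : μ • x = 0 := hxe ▸ hPT x hxS
  exact hx.2 ((smul_eq_zero.mp hμx).resolve_left hμ0)

theorem spectrum_comp_eq [FiniteDimensional K V] (hT : ∀ i, T (b i) = lam i • b i)
    (hP : ∀ x, x - P x ∈ Submodule.span K (b '' S))
    (hPT : ∀ y ∈ Submodule.span K (b '' S), P (T y) = 0)
    (hS : Submodule.span K (b '' S) ≠ ⊥) :
    spectrum K (P ∘ₗ T) = insert 0 {μ | ∃ i ∉ S, μ = lam i} := by
  ext μ
  rw [← Module.End.hasEigenvalue_iff_mem_spectrum]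
  refine ⟨eq_zero_or_of_hasEigenvalue_comp hT hP hPT, ?_⟩
  rintro (rfl | ⟨i, hi, rfl⟩)
  · exact hasEigenvalue_comp_zero hPT hS
  · exact hasEigenvalue_comp_of_notMem hT hP hPT hi

end Module.Basis

section Deflation

variable {𝕜 H : Type*} [RCLike 𝕜] [NormedAddCommGroup H] [InnerProductSpace 𝕜 H] {d : ℕ}

theorem deflation_apply_inv_apply_eq_zero {M A Minv PM : H →ₗ[𝕜] H} {U : Fin d → H}
    {E : Matrix (Fin d) (Fin d) 𝕜} (hM : M.IsSymmetric) (hMinv : ∀ x, M (Minv x) = x)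
    (hE : E = Matrix.of fun i j => ⟪U i, A (U j)⟫_𝕜) (hEunit : IsUnit E.det)
    (hPM : ∀ x, PM x = x - ∑ i, (∑ j, E⁻¹ i j * ⟪M (U j), x⟫_𝕜) • Minv (A (U i)))
    (k : Fin d) : PM (Minv (A (U k))) = 0 := by
  have hcoeff : ∀ i, ∑ j, E⁻¹ i j * ⟪M (U j), Minv (A (U k))⟫_𝕜 = (1 : Matrix _ _ 𝕜) i k := by
    intro i
    simp_rw [hM _ (Minv _), hMinv, ← Matrix.nonsing_inv_mul E hEunit, Matrix.mul_apply, hE,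
      Matrix.of_apply]
  simp [hPM, hcoeff, Matrix.one_apply]

end Deflation

theorem stmt7_general {H : Type*} [NormedAddCommGroup H] [InnerProductSpace ℂ H]
    [FiniteDimensional ℂ H] {N d : ℕ}
    (hd : 1 ≤ d)
    (M A Minv : H →ₗ[ℂ] H)
    (hM : M.IsSymmetric)
    (hMinv : ∀ x, M (Minv x) = x ∧ Minv (M x) = x)
    (lam : Fin N → ℝ)
    (W : Module.Basis (Fin N) ℂ H)
    (hW : ∀ i, Minv (A (W i)) = (lam i : ℂ) • W i)
    (U : Fin d → H)
    (hU : Submodule.span ℂ (Set.range U)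
        = Submodule.span ℂ (W '' {i : Fin N | (i : ℕ) < d}))
    (E : Matrix (Fin d) (Fin d) ℂ)
    (hE : E = Matrix.of fun i j => ⟪U i, A (U j)⟫_ℂ)
    (hEunit : IsUnit E.det)
    (PM : H →ₗ[ℂ] H)
    (hPM : ∀ x, PM x = x - ∑ i, (∑ j, E⁻¹ i j * ⟪M (U j), x⟫_ℂ) • Minv (A (U i))) :
    spectrum ℂ (PM ∘ₗ Minv ∘ₗ A : Module.End ℂ H)
      = insert (0 : ℂ) {z : ℂ | ∃ i : Fin N, d ≤ (i : ℕ) ∧ z = (lam i : ℂ)} := by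
  set V := Submodule.span ℂ (W '' {i : Fin N | (i : ℕ) < d})
  have hT : ∀ i, (Minv ∘ₗ A) (W i) = (lam i : ℂ) • W i := hW
  have hUV : ∀ k, U k ∈ V := fun k => hU ▸ Submodule.subset_span (Set.mem_range_self k)
  have hP : ∀ x, x - PM x ∈ V := by
    intro x
    rw [hPM, sub_sub_cancel]
    exact Submodule.sum_mem _ fun i _ => Submodule.smul_mem _ _
      (W.span_image_le_comap_of_apply_eq_smul hT _ (hUV i))
  have hPT : ∀ y ∈ V, PM ((Minv ∘ₗ A) y) = 0 := by
    have hker : Submodule.span ℂ (Set.range U) ≤ LinearMap.ker (PM ∘ₗ Minv ∘ₗ A) := by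
      rw [Submodule.span_le]
      rintro _ ⟨k, rfl⟩
      exact deflation_apply_inv_apply_eq_zero hM (fun x => (hMinv x).1) hE hEunit hPM k
    exact fun y hy => hker (hU ▸ hy)
  have hV : V ≠ ⊥ := by
    have hU0 : U ⟨0, hd⟩ ≠ 0 := fun h0 => hEunit.ne_zero <|
      Matrix.det_eq_zero_of_row_eq_zero ⟨0, hd⟩ fun j => by simp [hE, h0]
    exact fun hbot => hU0 ((Submodule.mem_bot ℂ).mp (hbot ▸ hUV _))
  rw [W.spectrum_comp_eq hT hP hPT hV]
  simp [not_lt]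

/-- If U spans the M⁻¹A-invariant subspace for eigenvalues λ₁,…,λ_d, the spectrum of
the deflated operator P_M M⁻¹ A equals {0} ∪ {λ_{d+1},…,λ_N}. -/
theorem stmt7 {H : Type*} [NormedAddCommGroup H] [InnerProductSpace ℂ H]
    [FiniteDimensional ℂ H] {N d : ℕ}
    (hN : Module.finrank ℂ H = N) (hd : 1 ≤ d) (hdN : d ≤ N)
    (M A Minv : H →ₗ[ℂ] H)
    (hM : M.IsSymmetric) (hA : A.IsSymmetric)
    (hMbij : Function.Bijective M) (hAbij : Function.Bijective A)
    (hMinv : ∀ x, M (Minv x) = x ∧ Minv (M x) = x)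
    (hMpos : ∀ x : H, x ≠ 0 → 0 < (⟪x, M x⟫_ℂ).re)
    (lam : Fin N → ℝ)
    (W : Module.Basis (Fin N) ℂ H)
    (hW : ∀ i, Minv (A (W i)) = (lam i : ℂ) • W i)
    (U : Fin d → H)
    (hU : Submodule.span ℂ (Set.range U)
        = Submodule.span ℂ (W '' {i : Fin N | (i : ℕ) < d}))
    (E : Matrix (Fin d) (Fin d) ℂ)
    (hE : E = Matrix.of fun i j => ⟪U i, A (U j)⟫_ℂ)
    (hEunit : IsUnit E.det)
    (PM : H →ₗ[ℂ] H)
    (hPM : ∀ x, PM x = x - ∑ i, (∑ j, E⁻¹ i j * ⟪M (U j), x⟫_ℂ) • Minv (A (U i))) :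
    spectrum ℂ (PM ∘ₗ Minv ∘ₗ A : Module.End ℂ H)
      = insert (0 : ℂ) {z : ℂ | ∃ i : Fin N, d ≤ (i : ℕ) ∧ z = (lam i : ℂ)} :=
  stmt7_general hd M A Minv hM hMinv lam W hW U hU E hE hEunit PM hPM
end

section
/- If V ∈ H^{N−d} consists of M-orthonormal eigenvectors of M⁻¹A with M⁻¹A V = V D₂ and the columns of V are M-orthogonal to U, then P_M V = V and P_M M⁻¹ A V = V D₂; in particular each λ ∈ {λ_{d+1},…,λ_N} is an eigenvalue of P_M M⁻¹ A. -/
open scoped InnerProductSpace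

/-- If V consists of M-orthonormal eigenvectors of M⁻¹A, M-orthogonal to U, then
P_M V = V and P_M M⁻¹ A V = V D₂; in particular each corresponding eigenvalue is
an eigenvalue of P_M M⁻¹ A. -/
theorem stmt8 {H : Type*} [NormedAddCommGroup H] [InnerProductSpace ℂ H]
    [FiniteDimensional ℂ H] {d m : ℕ}
    (M A Minv : H →ₗ[ℂ] H)
    (hM : M.IsSymmetric) (hA : A.IsSymmetric)
    (hMbij : Function.Bijective M) (hAbij : Function.Bijective A)
    (hMinv : ∀ x, M (Minv x) = x ∧ Minv (M x) = x)
    (hMpos : ∀ x : H, x ≠ 0 → 0 < (⟪x, M x⟫_ℂ).re)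
    (U : Fin d → H)
    (hUinv : ∀ i, Minv (A (U i)) ∈ Submodule.span ℂ (Set.range U))
    (E : Matrix (Fin d) (Fin d) ℂ)
    (hE : E = Matrix.of fun i j => ⟪U i, A (U j)⟫_ℂ)
    (hEunit : IsUnit E.det)
    (PM : H →ₗ[ℂ] H)
    (hPM : ∀ x, PM x = x - ∑ i, (∑ j, E⁻¹ i j * ⟪M (U j), x⟫_ℂ) • Minv (A (U i)))
    (mu : Fin m → ℝ)
    (V : Fin m → H)
    (hVeig : ∀ i, Minv (A (V i)) = (mu i : ℂ) • V i)
    (hVon : ∀ i j, ⟪M (V i), V j⟫_ℂ = if i = j then 1 else 0)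
    (hVU : ∀ i j, ⟪M (U j), V i⟫_ℂ = 0) :
    ∀ i, PM (V i) = V i ∧ PM (Minv (A (V i))) = (mu i : ℂ) • V i ∧
      Module.End.HasEigenvalue (PM ∘ₗ Minv ∘ₗ A : Module.End ℂ H) (mu i : ℂ) := by
  intro i
  have hfix : PM (V i) = V i := by
    rw [hPM]
    simp [hVU i]
  have heig : PM (Minv (A (V i))) = (mu i : ℂ) • V i := by
    rw [hVeig i, map_smul, hfix]
  refine ⟨hfix, heig, ?_⟩
  have hne : V i ≠ 0 := by
    intro h
    have := hVon i i
    simp [h] at this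
  exact Module.End.hasEigenvalue_of_hasEigenvector
    ⟨Module.End.mem_eigenspace_iff.mpr (by simpa using heig), hne⟩
end

section
/- If the initial residual of deflated MINRES satisfies r₀ ∈ span(V) where V consists of M-orthonormal eigenvectors of M⁻¹A for eigenvalues λ_{d+1},…,λ_N, then for every polynomial p of degree at most n with p(0)=1, ‖p(P_M M⁻¹ A) r₀‖_M ≤ ‖r₀‖_M · max_{i∈{d+1,…,N}} |p(λᵢ)|. -/
open scoped InnerProductSpace
open Polynomial

/-! Since every `U j` is `M`-orthogonal to every `V i`, the deflation `P_M` fixes each `V i`, so the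
`V i` remain eigenvectors of `P_M M⁻¹ A` and `p(P_M M⁻¹ A)` acts on the coordinates of `r₀` in the
basis `V` by multiplication with `p(λᵢ)`. As `V` is `M`-orthonormal, the squared `M`-norm of a
combination of the `V i` is the sum of the squared moduli of its coefficients, and each coefficient
is scaled by at most `max |p(λᵢ)|`. -/

theorem Module.End.aeval_apply_sum_smul_of_forall_apply_eq_smul {R E ι : Type*} [CommRing R]
    [AddCommGroup E] [Module R E] [Fintype ι] {T : Module.End R E} {v : ι → E} {μ : ι → R}
    (hv : ∀ i, T (v i) = μ i • v i) (c : ι → R) (p : R[X]) :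
    aeval T p (∑ i, c i • v i) = ∑ i, (c i * p.eval (μ i)) • v i := by
  have heig : ∀ i, aeval T p (v i) = p.eval (μ i) • v i := fun i => by
    by_cases hvi : v i = 0
    · simp [hvi]
    · exact Module.End.aeval_apply_of_hasEigenvector
        ⟨Module.End.mem_eigenspace_iff.mpr (hv i), hvi⟩
  simp only [map_sum, map_smul, heig, smul_smul]

theorem inner_map_sum_smul_of_inner_map_eq_ite {𝕜 E ι : Type*} [RCLike 𝕜]
    [NormedAddCommGroup E] [InnerProductSpace 𝕜 E] [Fintype ι] [DecidableEq ι]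
    (M : E →ₗ[𝕜] E) {v : ι → E} (hv : ∀ i j, ⟪M (v i), v j⟫_𝕜 = if i = j then 1 else 0)
    (a : ι → 𝕜) :
    ⟪M (∑ i, a i • v i), ∑ i, a i • v i⟫_𝕜 = ((∑ i, ‖a i‖ ^ 2 : ℝ) : 𝕜) := by
  simp only [map_sum, map_smul, sum_inner, inner_sum, inner_smul_left, inner_smul_right, hv,
    mul_ite, mul_one, mul_zero, Finset.sum_ite_eq', Finset.mem_univ, if_true]
  push_cast
  exact Finset.sum_congr rfl fun i _ => RCLike.mul_conj (a i)

theorem sqrt_sum_norm_mul_sq_le {R ι : Type*} [SeminormedRing R] [Fintype ι] (a w : ι → R) :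
    √(∑ i, ‖a i * w i‖ ^ 2) ≤ √(∑ i, ‖a i‖ ^ 2) * ⨆ i, ‖w i‖ := by
  have hw : ∀ i, ‖w i‖ ≤ ⨆ i, ‖w i‖ := le_ciSup (Set.finite_range _).bddAbove
  have hS : 0 ≤ ⨆ i, ‖w i‖ := Real.iSup_nonneg fun i => norm_nonneg _
  rw [← Real.sqrt_sq hS, ← Real.sqrt_mul (Finset.sum_nonneg fun i _ => by positivity),
    Finset.sum_mul]
  gcongr with i
  calc ‖a i * w i‖ ^ 2 ≤ (‖a i‖ * ‖w i‖) ^ 2 := by gcongr; exact norm_mul_le _ _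
    _ ≤ ‖a i‖ ^ 2 * (⨆ i, ‖w i‖) ^ 2 := by rw [mul_pow]; gcongr; exact hw i

theorem stmt9_general {H : Type*} [NormedAddCommGroup H] [InnerProductSpace ℂ H] {d m : ℕ}
    (M A Minv : H →ₗ[ℂ] H)
    (U : Fin d → H)
    (E : Matrix (Fin d) (Fin d) ℂ)
    (PM : H →ₗ[ℂ] H)
    (hPM : ∀ x, PM x = x - ∑ i, (∑ j, E⁻¹ i j * ⟪M (U j), x⟫_ℂ) • Minv (A (U i)))
    (mu : Fin m → ℝ)
    (V : Fin m → H)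
    (hVeig : ∀ i, Minv (A (V i)) = (mu i : ℂ) • V i)
    (hVon : ∀ i j, ⟪M (V i), V j⟫_ℂ = if i = j then 1 else 0)
    (hVU : ∀ i j, ⟪M (U j), V i⟫_ℂ = 0)
    (r0 : H) (hr0 : r0 ∈ Submodule.span ℂ (Set.range V))
    (p : Polynomial ℂ) :
    Real.sqrt ((⟪M ((Polynomial.aeval (PM ∘ₗ Minv ∘ₗ A : Module.End ℂ H) p) r0),
        (Polynomial.aeval (PM ∘ₗ Minv ∘ₗ A : Module.End ℂ H) p) r0⟫_ℂ).re)
      ≤ Real.sqrt ((⟪M r0, r0⟫_ℂ).re) *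
        (⨆ i : Fin m, ‖p.eval (mu i : ℂ)‖) := by
  have hPV : ∀ i, PM (V i) = V i := fun i => by simp [hPM, hVU]
  have hTV : ∀ i, (PM ∘ₗ Minv ∘ₗ A) (V i) = (mu i : ℂ) • V i := fun i => by
    simp [hVeig, hPV]
  obtain ⟨c, rfl⟩ := (Submodule.mem_span_range_iff_exists_fun ℂ).mp hr0
  rw [Module.End.aeval_apply_sum_smul_of_forall_apply_eq_smul hTV,
    inner_map_sum_smul_of_inner_map_eq_ite M hVon, inner_map_sum_smul_of_inner_map_eq_ite M hVon]
  simp only [← RCLike.re_to_complex, RCLike.ofReal_re]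
  exact sqrt_sum_norm_mul_sq_le c _

/-- If r₀ ∈ span(V) with V M-orthonormal eigenvectors of M⁻¹A for λ_{d+1},…,λ_N, then
for every polynomial p of degree ≤ n with p(0)=1:
‖p(P_M M⁻¹ A) r₀‖_M ≤ ‖r₀‖_M · max_i |p(λᵢ)|. -/
theorem stmt9 {H : Type*} [NormedAddCommGroup H] [InnerProductSpace ℂ H]
    [FiniteDimensional ℂ H] {d m n : ℕ} (hm : 0 < m)
    (M A Minv : H →ₗ[ℂ] H)
    (hM : M.IsSymmetric) (hA : A.IsSymmetric)
    (hMbij : Function.Bijective M) (hAbij : Function.Bijective A)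
    (hMinv : ∀ x, M (Minv x) = x ∧ Minv (M x) = x)
    (hMpos : ∀ x : H, x ≠ 0 → 0 < (⟪x, M x⟫_ℂ).re)
    (U : Fin d → H)
    (hUinv : ∀ i, Minv (A (U i)) ∈ Submodule.span ℂ (Set.range U))
    (E : Matrix (Fin d) (Fin d) ℂ)
    (hE : E = Matrix.of fun i j => ⟪U i, A (U j)⟫_ℂ)
    (hEunit : IsUnit E.det)
    (PM : H →ₗ[ℂ] H)
    (hPM : ∀ x, PM x = x - ∑ i, (∑ j, E⁻¹ i j * ⟪M (U j), x⟫_ℂ) • Minv (A (U i)))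
    (mu : Fin m → ℝ)
    (V : Fin m → H)
    (hVeig : ∀ i, Minv (A (V i)) = (mu i : ℂ) • V i)
    (hVon : ∀ i j, ⟪M (V i), V j⟫_ℂ = if i = j then 1 else 0)
    (hVU : ∀ i j, ⟪M (U j), V i⟫_ℂ = 0)
    (r0 : H) (hr0 : r0 ∈ Submodule.span ℂ (Set.range V))
    (p : Polynomial ℂ) (hdeg : p.natDegree ≤ n) (hp0 : p.eval 0 = 1) :
    Real.sqrt ((⟪M ((Polynomial.aeval (PM ∘ₗ Minv ∘ₗ A : Module.End ℂ H) p) r0),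
        (Polynomial.aeval (PM ∘ₗ Minv ∘ₗ A : Module.End ℂ H) p) r0⟫_ℂ).re)
      ≤ Real.sqrt ((⟪M r0, r0⟫_ℂ).re) *
        (⨆ i : Fin m, ‖p.eval (mu i : ℂ)‖) :=
  stmt9_general M A Minv U E PM hPM mu V hVeig hVon hVU r0 hr0 p
end

section
/- Under the Lanczos relation P_M M⁻¹A V_n = V_{n+1} T̲_n with U M-orthonormal and V_{n+1} M-orthonormal and M-orthogonal to U, the projected operator matrix satisfies ⟨V_n, M⁻¹A V_n⟩_M = T_n + B E⁻¹ B^H, where B = ⟨V_n, AU⟩, E = ⟨U, AU⟩, and T_n is the upper n×n block of T̲_n; consequently the Ritz pairs of M⁻¹A with respect to span[V_n,U] are the eigenpairs of the block matrix [[T_n + B E⁻¹ B^H, B],[B^H, E]]. -/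
open scoped InnerProductSpace

/-- Under the deflated Lanczos relation, ⟨V_n, M⁻¹A V_n⟩_M = T_n + B E⁻¹ Bᴴ, and the
Ritz pairs of M⁻¹A with respect to span[V_n,U] are the eigenpairs of the block matrix
[[T_n + B E⁻¹ Bᴴ, B],[Bᴴ, E]]. -/
theorem stmt14 {H : Type*} [NormedAddCommGroup H] [InnerProductSpace ℂ H] {n d : ℕ}
    (M A Minv : H →ₗ[ℂ] H)
    (hM : M.IsSymmetric) (hA : A.IsSymmetric)
    (hMbij : Function.Bijective M) (hAbij : Function.Bijective A)
    (hMinv : ∀ x, M (Minv x) = x ∧ Minv (M x) = x)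
    (hMpos : ∀ x : H, x ≠ 0 → 0 < (⟪x, M x⟫_ℂ).re)
    (U : Fin d → H)
    (hUon : ∀ i j, ⟪M (U i), U j⟫_ℂ = if i = j then 1 else 0)
    (E : Matrix (Fin d) (Fin d) ℂ)
    (hE : E = Matrix.of fun i j => ⟪U i, A (U j)⟫_ℂ)
    (hEunit : IsUnit E.det)
    (PM : H → H)
    (hPM : ∀ x, PM x = x - ∑ i, (∑ j, E⁻¹ i j * ⟪M (U j), x⟫_ℂ) • Minv (A (U i)))
    (Vn1 : Fin (n + 1) → H)
    (hVon : ∀ i j, ⟪M (Vn1 i), Vn1 j⟫_ℂ = if i = j then 1 else 0)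
    (hVU : ∀ i j, ⟪M (Vn1 i), U j⟫_ℂ = 0)
    (Vn : Fin n → H) (hVn : Vn = Vn1 ∘ Fin.castSucc)
    (T : Matrix (Fin (n + 1)) (Fin n) ℝ)
    (hTsym : ∀ i j : Fin n, T (Fin.castSucc i) j = T (Fin.castSucc j) i)
    (hLanczos : ∀ j, PM (Minv (A (Vn j))) = ∑ i, (T i j : ℂ) • Vn1 i)
    (B : Matrix (Fin n) (Fin d) ℂ)
    (hB : B = Matrix.of fun i k => ⟪Vn i, A (U k)⟫_ℂ)
    (Tn : Matrix (Fin n) (Fin n) ℂ)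
    (hTn : Tn = Matrix.of fun i j => (T (Fin.castSucc i) j : ℂ)) :
    (∀ i j : Fin n, ⟪M (Vn i), Minv (A (Vn j))⟫_ℂ
        = (Tn + B * E⁻¹ * B.conjTranspose) i j) ∧
    (∀ (wt : Fin n ⊕ Fin d → ℂ) (mu : ℂ),
      (∀ s ∈ Submodule.span ℂ (Set.range (Sum.elim Vn U)),
          ⟪M s, Minv (A (∑ i, wt i • Sum.elim Vn U i))
            - mu • (∑ i, wt i • Sum.elim Vn U i)⟫_ℂ = 0)
        ↔ (Matrix.fromBlocks (Tn + B * E⁻¹ * B.conjTranspose) B B.conjTranspose E).mulVec wt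
            = mu • wt) := by

  have hMi : ∀ x, M (Minv x) = x := fun x => (hMinv x).1
  have key1 : ∀ x y : H, ⟪M x, Minv (A y)⟫_ℂ = ⟪x, A y⟫_ℂ := by
    intro x y; rw [hM, hMi]
  have hVc : ∀ i : Fin n, Vn i = Vn1 (Fin.castSucc i) := by
    intro i; rw [hVn]; rfl
  have hBH : ∀ (k : Fin d) (j : Fin n), ⟪U k, A (Vn j)⟫_ℂ = B.conjTranspose k j := by
    intro k j
    rw [← hA, ← inner_conj_symm]
    simp [hB, Matrix.conjTranspose_apply]
  have part1 : ∀ i j : Fin n, ⟪M (Vn i), Minv (A (Vn j))⟫_ℂ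
      = (Tn + B * E⁻¹ * B.conjTranspose) i j := by
    intro i j
    have hx : Minv (A (Vn j)) = (∑ l, (T l j : ℂ) • Vn1 l)
        + ∑ l, (∑ k, E⁻¹ l k * ⟪M (U k), Minv (A (Vn j))⟫_ℂ) • Minv (A (U l)) := by
      have h1 := hPM (Minv (A (Vn j)))
      rw [hLanczos j] at h1
      exact sub_eq_iff_eq_add.mp h1.symm
    conv_lhs => rw [hx]
    rw [inner_add_right, inner_sum, inner_sum]
    have e1 : ∀ l, ⟪M (Vn i), (T l j : ℂ) • Vn1 l⟫_ℂ
        = if Fin.castSucc i = l then (T l j : ℂ) else 0 := by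
      intro l
      rw [inner_smul_right, hVc, hVon]
      simp [mul_ite]
    have e2 : ∀ l, ⟪M (Vn i), (∑ k, E⁻¹ l k * ⟪M (U k), Minv (A (Vn j))⟫_ℂ) • Minv (A (U l))⟫_ℂ
        = B i l * ∑ k, E⁻¹ l k * B.conjTranspose k j := by
      intro l
      rw [inner_smul_right, key1]
      have : ∀ k : Fin d, ⟪M (U k), Minv (A (Vn j))⟫_ℂ = B.conjTranspose k j := by
        intro k; rw [key1, hBH]
      simp only [this]
      rw [mul_comm]
      congr 1
      simp [hB]
    simp only [e1, e2, Finset.sum_ite_eq, Finset.mem_univ, if_true]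
    rw [Matrix.mul_assoc, Matrix.add_apply, Matrix.mul_apply, hTn]
    simp [Matrix.mul_apply]
  refine ⟨part1, ?_⟩
  intro wt mu
  set W : Fin n ⊕ Fin d → H := Sum.elim Vn U with hW
  have hWon : ∀ s t, ⟪M (W s), W t⟫_ℂ = if s = t then 1 else 0 := by
    intro s t
    rcases s with i | k <;> rcases t with j | l
    · rw [hW]
      simp only [Sum.elim_inl]
      rw [hVc i, hVc j, hVon]
      simp [Fin.castSucc_inj]
    · rw [hW]; simp only [Sum.elim_inl, Sum.elim_inr]
      rw [hVc i, hVU]; simp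
    · rw [hW]; simp only [Sum.elim_inl, Sum.elim_inr]
      rw [hM, ← inner_conj_symm, hVc j, hVU]; simp
    · rw [hW]; simp only [Sum.elim_inr]
      rw [hUon]; simp [Sum.inr.injEq]
  set G := Matrix.fromBlocks (Tn + B * E⁻¹ * B.conjTranspose) B B.conjTranspose E with hG
  have hgram : ∀ s t, ⟪M (W s), Minv (A (W t))⟫_ℂ = G s t := by
    intro s t
    rcases s with i | k <;> rcases t with j | l
    · simpa [hW, hG] using part1 i j
    · rw [hW, hG]; simp only [Sum.elim_inl, Sum.elim_inr, Matrix.fromBlocks_apply₁₂]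
      rw [key1, hB]; rfl
    · rw [hW, hG]; simp only [Sum.elim_inl, Sum.elim_inr, Matrix.fromBlocks_apply₂₁]
      rw [key1, hBH]
    · rw [hW, hG]; simp only [Sum.elim_inr, Matrix.fromBlocks_apply₂₂]
      rw [key1, hE]; rfl
  set x : H := ∑ i, wt i • W i with hxdef
  have key2 : ∀ t, ⟪M (W t), Minv (A x) - mu • x⟫_ℂ = G.mulVec wt t - mu * wt t := by
    intro t
    rw [inner_sub_right, inner_smul_right]
    have h1 : ⟪M (W t), Minv (A x)⟫_ℂ = G.mulVec wt t := by
      rw [hxdef]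
      rw [map_sum, map_sum]
      rw [inner_sum]
      simp only [map_smul, inner_smul_right, hgram]
      simp [Matrix.mulVec, dotProduct, mul_comm]
    have h2 : ⟪M (W t), x⟫_ℂ = wt t := by
      rw [hxdef, inner_sum]
      simp only [inner_smul_right, hWon, mul_ite, mul_one, mul_zero]
      simp
    rw [h1, h2]
  constructor
  · intro h
    funext t
    have ht := h (W t) (Submodule.subset_span (Set.mem_range_self t))
    rw [key2 t] at ht
    have := sub_eq_zero.mp ht
    simpa using this
  · intro h s hs
    have hz : ∀ t, ⟪M (W t), Minv (A x) - mu • x⟫_ℂ = 0 := by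
      intro t
      rw [key2 t, h]
      simp
    induction hs using Submodule.span_induction with
    | mem a ha => obtain ⟨t, rfl⟩ := ha; exact hz t
    | zero => simp
    | add a b _ _ ha hb => rw [map_add, inner_add_left, ha, hb]; simp
    | smul c a _ ha => rw [map_smul, inner_smul_left, ha]; simp
end
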